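/- arXiv:math/0308155 — 2 statements merged into one kernel-verified Lean document; each statement's English description precedes it below -/
import Mathlib

section
/- Width of a graph is invariant under exchanging the heights of two adjacent maxima: if positions i and i+1 in the critical sequence are both maxima (regular maxima or λ-vertices), swapping them leaves the graph width W(Γ,h) unchanged, where W uses weights ρᵢ ∈ {2,3,4} depending on whether adjacent critical points are vertices. -/
/-- The weight `ρᵢ` of the gap between critical points `p (i-1)` and `p i`:
`2` if both are vertices, `3` if exactly one is, `4` if neither is. -/
def graphRho (isV : ℕ → Bool) (i : ℕ) : ℤ :=
  if isV (i - 1) ∧ isV i then 2 else if isV (i - 1) ∨ isV i then 3 else 4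

/-- The level count `wᵢ` at a regular value between `p (i-1)` and `p i`:
the sum of the width-changes at the critical points below it. -/
def graphLevel (δ : ℕ → ℤ) (i : ℕ) : ℤ := ∑ j ∈ Finset.range i, δ j

/-- The width `W(Γ,h)` of a graph with `N` critical points: `∑ ρᵢ · wᵢ`. -/
def graphWidth (N : ℕ) (isV : ℕ → Bool) (δ : ℕ → ℤ) : ℤ :=
  ∑ i ∈ Finset.Ico 1 N, graphRho isV i * graphLevel δ i

/-- Exchanging the heights of two adjacent maxima (regular maxima or λ-vertices)
leaves the graph width `W(Γ,h)` unchanged. -/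
theorem graph_width_swap_adjacent_maxima (N t : ℕ) (ht : t + 1 < N)
    (isV : ℕ → Bool) (δ : ℕ → ℤ)
    (hmag : ∀ i < N, δ i = (if isV i then 1 else 2) ∨ δ i = -(if isV i then 1 else 2))
    (hclosed : graphLevel δ N = 0)
    (hmax₁ : δ t < 0) (hmax₂ : δ (t + 1) < 0) :
    graphWidth N (isV ∘ Equiv.swap t (t + 1)) (δ ∘ Equiv.swap t (t + 1)) =
      graphWidth N isV δ := by
  set e := Equiv.swap t (t + 1) with he
  have het : e t = t + 1 := Equiv.swap_apply_left _ _
  have het1 : e (t + 1) = t := Equiv.swap_apply_right _ _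
  have hefix : ∀ j, j ≠ t → j ≠ t + 1 → e j = j := fun j h1 h2 =>
    Equiv.swap_apply_of_ne_of_ne h1 h2
  have ha : δ t = -(if isV t then 1 else 2) := by
    rcases hmag t (by omega) with h | h
    · exfalso; split_ifs at h <;> omega
    · exact h
  have hb : δ (t + 1) = -(if isV (t + 1) then 1 else 2) := by
    rcases hmag (t + 1) (by omega) with h | h
    · exfalso; split_ifs at h <;> omega
    · exact h
  have hlev_le : ∀ i, i ≤ t → graphLevel (δ ∘ e) i = graphLevel δ i := by
    intro i hi
    unfold graphLevel
    refine Finset.sum_congr rfl fun j hj => ?_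
    rw [Finset.mem_range] at hj
    simp only [Function.comp_apply]
    rw [hefix j (by omega) (by omega)]
  have hlev_ge : ∀ i, t + 2 ≤ i → graphLevel (δ ∘ e) i = graphLevel δ i := by
    intro i hi
    unfold graphLevel
    refine Finset.sum_equiv e (fun j => ?_) (fun j _ => rfl)
    simp only [Finset.mem_range]
    rcases eq_or_ne j t with rfl | h1
    · rw [het]; omega
    rcases eq_or_ne j (t + 1) with rfl | h2
    · rw [het1]; omega
    · rw [hefix j h1 h2]
  have hlev_t1 : graphLevel (δ ∘ e) (t + 1) = graphLevel δ t + δ (t + 1) := by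
    unfold graphLevel
    rw [Finset.sum_range_succ]
    congr 1
    · exact hlev_le t le_rfl
    · simp only [Function.comp_apply, het]
  have hwt1 : graphLevel δ (t + 1) = graphLevel δ t + δ t := Finset.sum_range_succ δ t
  have hwt2 : graphLevel δ (t + 2) = graphLevel δ t + δ t + δ (t + 1) := by
    unfold graphLevel
    rw [Finset.sum_range_succ, Finset.sum_range_succ]
  have key : graphWidth N (isV ∘ e) (δ ∘ e) - graphWidth N isV δ = 0 := by
    unfold graphWidth
    rw [← Finset.sum_sub_distrib]
    set f : ℕ → ℤ := fun i =>
      graphRho (isV ∘ e) i * graphLevel (δ ∘ e) i - graphRho isV i * graphLevel δ i with hf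
    have hzero : ∀ i ∈ Finset.Ico 1 N, f i ≠ 0 → (i = t ∨ i = t + 1 ∨ i = t + 2) := by
      intro i hi hne
      by_contra h
      push_neg at h
      apply hne
      rw [Finset.mem_Ico] at hi
      have h1 : isV (e (i - 1)) = isV (i - 1) := by rw [hefix _ (by omega) (by omega)]
      have h2 : isV (e i) = isV i := by rw [hefix _ (by omega) (by omega)]
      have h3 : graphLevel (δ ∘ e) i = graphLevel δ i := by
        rcases lt_or_ge i (t + 1) with h' | h'
        · exact hlev_le i (by omega)
        · exact hlev_ge i (by omega)
      simp only [hf, graphRho, Function.comp_apply, h1, h2, h3, sub_self]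
    rw [← Finset.sum_filter_of_ne hzero]
    have hset : (Finset.Ico 1 N).filter (fun i => i = t ∨ i = t + 1 ∨ i = t + 2) =
        Finset.Ico (max 1 t) (min N (t + 3)) := by
      ext i
      simp only [Finset.mem_filter, Finset.mem_Ico]
      omega
    rw [hset]
    have hrho1 : graphRho (isV ∘ e) (t + 1) = graphRho isV (t + 1) := by
      simp only [graphRho, Function.comp_apply, Nat.add_sub_cancel, het, het1]
      cases isV t <;> cases isV (t + 1) <;> simp
    have hft1 : f (t + 1) = graphRho isV (t + 1) * (δ (t + 1) - δ t) := by
      simp only [hf, hrho1, hlev_t1, hwt1]; ring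
    have hft2 : f (t + 2) =
        (graphRho (isV ∘ e) (t + 2) - graphRho isV (t + 2)) * graphLevel δ (t + 2) := by
      have h3 : graphLevel (δ ∘ e) (t + 2) = graphLevel δ (t + 2) := hlev_ge _ le_rfl
      simp only [hf, h3]; ring
    have hr2 : graphRho (isV ∘ e) (t + 2) =
        (if isV t ∧ isV (t + 2) then 2 else if isV t ∨ isV (t + 2) then 3 else 4 : ℤ) := by
      simp only [graphRho, Function.comp_apply, show t + 2 - 1 = t + 1 from rfl, het1,
        hefix (t + 2) (by omega) (by omega)]
    have hr2' : graphRho isV (t + 2) =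
        (if isV (t + 1) ∧ isV (t + 2) then 2 else if isV (t + 1) ∨ isV (t + 2) then 3 else 4 : ℤ) := by
      simp only [graphRho, show t + 2 - 1 = t + 1 from rfl]
    by_cases h0 : t = 0
    · have hw0 : graphLevel δ t = 0 := by rw [h0]; rfl
      have hm : max 1 t = 1 := by omega
      by_cases hN : N = t + 2
      · have hmin : min N (t + 3) = t + 2 := by omega
        have hico : Finset.Ico 1 (t + 2) = {t + 1} := by
          ext i
          simp only [Finset.mem_Ico, Finset.mem_singleton]
          omega
        rw [hm, hmin, hico, Finset.sum_singleton, hft1]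
        have hcl : graphLevel δ t + δ t + δ (t + 1) = 0 := by
          rw [← hwt2, ← hN]; exact hclosed
        simp only [graphRho, Nat.add_sub_cancel]
        cases hA : isV t <;> cases hB : isV (t + 1) <;>
          simp only [hA, hB] at ha hb ⊢ <;> simp at ha hb ⊢ <;> omega
      · have hmin : min N (t + 3) = t + 3 := by omega
        have hico : Finset.Ico 1 (t + 3) = {t + 1, t + 2} := by
          ext i
          simp only [Finset.mem_Ico, Finset.mem_insert, Finset.mem_singleton]
          omega
        rw [hm, hmin, hico,
          Finset.sum_insert (by simp only [Finset.mem_singleton]; omega),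
          Finset.sum_singleton, hft1, hft2, hr2, hr2']
        simp only [graphRho, Nat.add_sub_cancel]
        rw [hw0] at hwt2
        cases hA : isV t <;> cases hB : isV (t + 1) <;> cases hD : isV (t + 2) <;>
          simp only [hA, hB, hD] at ha hb ⊢ <;> simp at ha hb ⊢ <;> omega
    · have hm : max 1 t = t := by omega
      have hft : f t = (graphRho (isV ∘ e) t - graphRho isV t) * graphLevel δ t := by
        have h3 : graphLevel (δ ∘ e) t = graphLevel δ t := hlev_le t le_rfl
        simp only [hf, h3]; ring
      have hrt : graphRho (isV ∘ e) t =
          (if isV (t - 1) ∧ isV (t + 1) then 2 else if isV (t - 1) ∨ isV (t + 1) then 3 else 4 : ℤ) := by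
        simp only [graphRho, Function.comp_apply, het, hefix (t - 1) (by omega) (by omega)]
      have hrt' : graphRho isV t =
          (if isV (t - 1) ∧ isV t then 2 else if isV (t - 1) ∨ isV t then 3 else 4 : ℤ) := rfl
      by_cases hN : N = t + 2
      · have hmin : min N (t + 3) = t + 2 := by omega
        have hico : Finset.Ico t (t + 2) = {t, t + 1} := by
          ext i
          simp only [Finset.mem_Ico, Finset.mem_insert, Finset.mem_singleton]
          omega
        rw [hm, hmin, hico,
          Finset.sum_insert (by simp only [Finset.mem_singleton]; omega),
          Finset.sum_singleton, hft, hft1, hrt, hrt']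
        have hcl : graphLevel δ t + δ t + δ (t + 1) = 0 := by
          rw [← hwt2, ← hN]; exact hclosed
        simp only [graphRho, Nat.add_sub_cancel]
        cases hA : isV t <;> cases hB : isV (t + 1) <;> cases hC : isV (t - 1) <;>
          simp only [hA, hB, hC] at ha hb ⊢ <;> simp at ha hb ⊢ <;> omega
      · have hmin : min N (t + 3) = t + 3 := by omega
        have hico : Finset.Ico t (t + 3) = {t, t + 1, t + 2} := by
          ext i
          simp only [Finset.mem_Ico, Finset.mem_insert, Finset.mem_singleton]
          omega
        rw [hm, hmin, hico,
          Finset.sum_insert (by simp only [Finset.mem_insert, Finset.mem_singleton]; omega),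
          Finset.sum_insert (by simp only [Finset.mem_singleton]; omega),
          Finset.sum_singleton, hft, hft1, hft2, hrt, hrt', hr2, hr2']
        simp only [graphRho, Nat.add_sub_cancel]
        cases hA : isV t <;> cases hB : isV (t + 1) <;> cases hC : isV (t - 1) <;>
          cases hD : isV (t + 2) <;>
          simp only [hA, hB, hC, hD] at ha hb ⊢ <;> simp at ha hb ⊢ <;> omega
  omega
end

section
/- Pushing a maximum below an adjacent minimum strictly decreases graph width: if pᵢ is a maximum and p_{i+1} is a minimum (adjacent critical points), then transposing them strictly decreases W(Γ,h). -/
/-- Pushing a maximum down below an adjacent minimum strictly decreases the graph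
width: if the critical point at position `t` is a minimum lying just below a
maximum at position `t + 1`, then transposing them (so that the maximum now lies
below the minimum) strictly decreases `W(Γ,h)`. -/
theorem graph_width_swap_max_below_min (N t : ℕ) (ht : t + 1 < N)
    (isV : ℕ → Bool) (δ : ℕ → ℤ)
    (hmag : ∀ i < N, δ i = (if isV i then 1 else 2) ∨ δ i = -(if isV i then 1 else 2))
    (hclosed : graphLevel δ N = 0)
    (hmin : 0 < δ t) (hmax : δ (t + 1) < 0) :
    graphWidth N (isV ∘ Equiv.swap t (t + 1)) (δ ∘ Equiv.swap t (t + 1)) <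
      graphWidth N isV δ := by
  set σ : Equiv.Perm ℕ := Equiv.swap t (t + 1) with hσ
  have hσt : σ t = t + 1 := Equiv.swap_apply_left _ _
  have hσt1 : σ (t + 1) = t := Equiv.swap_apply_right _ _
  have hσo : ∀ j, j ≠ t → j ≠ t + 1 → σ j = j := fun j h1 h2 =>
    Equiv.swap_apply_of_ne_of_ne h1 h2
  have hVo : ∀ j, j ≠ t → j ≠ t + 1 → (isV ∘ σ) j = isV j := by
    intro j h1 h2; simp [Function.comp, hσo j h1 h2]
  have L1 : ∀ i, i ≠ t + 1 → graphLevel (δ ∘ σ) i = graphLevel δ i := by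
    intro i hi
    unfold graphLevel
    rcases lt_or_ge i (t + 1) with h | h
    · refine Finset.sum_congr rfl fun j hj => ?_
      simp only [Finset.mem_range] at hj
      simp [Function.comp, hσo j (by omega) (by omega)]
    · have h2 : t + 1 < i := by omega
      calc ∑ j ∈ Finset.range i, (δ ∘ σ) j = ∑ j ∈ Finset.range i, δ (σ j) := rfl
        _ = ∑ j ∈ Finset.range i, δ j := by
            refine Equiv.Perm.sum_comp σ _ δ ?_
            intro x hx
            simp only [Set.mem_setOf_eq] at hx
            simp only [Finset.coe_range, Set.mem_Iio]
            by_contra hxx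
            exact hx (hσo x (by omega) (by omega))
  have L2 : graphLevel (δ ∘ σ) (t + 1) = graphLevel δ t + δ (t + 1) := by
    unfold graphLevel
    rw [Finset.sum_range_succ]
    congr 1
    · refine Finset.sum_congr rfl fun j hj => ?_
      simp only [Finset.mem_range] at hj
      simp [Function.comp, hσo j (by omega) (by omega)]
    · simp [Function.comp, hσt]
  have W1 : graphLevel δ (t + 1) = graphLevel δ t + δ t := by
    unfold graphLevel; rw [Finset.sum_range_succ]
  have W2 : graphLevel δ (t + 2) = graphLevel δ t + δ t + δ (t + 1) := by
    unfold graphLevel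
    rw [show t + 2 = (t + 1) + 1 from rfl, Finset.sum_range_succ, Finset.sum_range_succ]
  set g : ℕ → ℤ := fun i =>
    graphRho isV i * graphLevel δ i - graphRho (isV ∘ σ) i * graphLevel (δ ∘ σ) i with hg
  have key : graphWidth N isV δ - graphWidth N (isV ∘ σ) (δ ∘ σ) = ∑ i ∈ Finset.Ico 1 N, g i := by
    unfold graphWidth
    rw [← Finset.sum_sub_distrib]
  have gzero : ∀ i, 1 ≤ i → i ≠ t → i ≠ t + 1 → i ≠ t + 2 → g i = 0 := by
    intro i h1 h2 h3 h4
    have hρ : graphRho (isV ∘ σ) i = graphRho isV i := by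
      unfold graphRho
      rw [hVo i h2 h3, hVo (i - 1) (by omega) (by omega)]
    simp only [hg]
    rw [hρ, L1 i h3]; ring
  have hsum : ∑ i ∈ Finset.Ico 1 N, g i = g t + g (t + 1) + g (t + 2) := by
    have hstep1 : ∑ i ∈ Finset.Ico 1 N, g i
        = ∑ i ∈ Finset.Ico 1 N ∩ {t, t + 1, t + 2}, g i := by
      refine (Finset.sum_subset Finset.inter_subset_left ?_).symm
      intro i hi hni
      have h1 : 1 ≤ i := (Finset.mem_Ico.mp hi).1
      have hT : i ∉ ({t, t + 1, t + 2} : Finset ℕ) := fun h => hni (Finset.mem_inter.mpr ⟨hi, h⟩)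
      simp only [Finset.mem_insert, Finset.mem_singleton] at hT
      push_neg at hT
      exact gzero i h1 hT.1 hT.2.1 hT.2.2
    have hstep2 : ∑ i ∈ Finset.Ico 1 N ∩ {t, t + 1, t + 2}, g i
        = ∑ i ∈ ({t, t + 1, t + 2} : Finset ℕ), g i := by
      refine Finset.sum_subset Finset.inter_subset_right ?_
      intro i hi hni
      have hni' : i ∉ Finset.Ico 1 N := fun h => hni (Finset.mem_inter.mpr ⟨h, hi⟩)
      rw [Finset.mem_Ico] at hni'
      push_neg at hni'
      simp only [Finset.mem_insert, Finset.mem_singleton] at hi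
      rcases Nat.eq_zero_or_pos i with h0 | hpos
      · subst h0; simp [hg, graphLevel]
      · have hNi : N ≤ i := hni' hpos
        have hiN : i = N := by omega
        have hN0 : graphLevel (δ ∘ σ) i = 0 := by
          rw [hiN, L1 N (by omega), hclosed]
        have hN1 : graphLevel δ i = 0 := by rw [hiN, hclosed]
        simp [hg, hN0, hN1]
    rw [hstep1, hstep2,
      Finset.sum_insert (by intro h; simp only [Finset.mem_insert, Finset.mem_singleton] at h; omega),
      Finset.sum_insert (Finset.notMem_singleton.mpr (by omega)),
      Finset.sum_singleton]
    ring
  have HB : δ t = if isV t then 1 else 2 := by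
    rcases hmag t (by omega) with h | h
    · exact h
    · exfalso; rw [h] at hmin; split at hmin <;> omega
  have HC : δ (t + 1) = -(if isV (t + 1) then 1 else 2) := by
    rcases hmag (t + 1) (by omega) with h | h
    · exfalso; rw [h] at hmax; split at hmax <;> omega
    · exact h
  have ht1ρ : graphRho (isV ∘ σ) (t + 1) = graphRho isV (t + 1) := by
    unfold graphRho
    have e1 : (t + 1) - 1 = t := by omega
    rw [e1]
    simp only [Function.comp_apply, hσt, hσt1]
    cases isV t <;> cases isV (t + 1) <;> simp
  have gt1 : g (t + 1) = graphRho isV (t + 1) * (δ t - δ (t + 1)) := by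
    simp only [hg]
    rw [ht1ρ, L2, W1]; ring
  have gtt : g t = (graphRho isV t - graphRho (isV ∘ σ) t) * graphLevel δ t := by
    simp only [hg]
    rw [L1 t (by omega)]; ring
  have gt2 : g (t + 2) = (graphRho isV (t + 2) - graphRho (isV ∘ σ) (t + 2))
      * (graphLevel δ t + δ t + δ (t + 1)) := by
    simp only [hg]
    rw [L1 (t + 2) (by omega), W2]; ring
  rw [← sub_pos, key, hsum, gtt, gt1, gt2, HB, HC]
  rcases t with _ | s
  · have ha : graphLevel δ 0 = 0 := by simp [graphLevel]
    rw [ha]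
    have h2 : σ 2 = 2 := hσo 2 (by omega) (by omega)
    cases hb : isV 0 <;> cases hc : isV 1 <;> cases hd : isV 2 <;>
      simp [graphRho, Function.comp, hσt, hσt1, h2, hb, hc, hd]
  · have hs' : σ s = s := hσo s (by omega) (by omega)
    have hs3 : σ (s + 3) = s + 3 := hσo (s + 3) (by omega) (by omega)
    have e1 : s + 1 - 1 = s := by omega
    have e2 : s + 1 + 1 - 1 = s + 1 := by omega
    have e3 : s + 1 + 2 - 1 = s + 2 := by omega
    have e4 : s + 1 + 2 = s + 3 := by omega
    cases hb : isV (s + 1) <;> cases hc : isV (s + 2) <;>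
      cases hd : isV s <;> cases he : isV (s + 3) <;>
      · simp only [graphRho, Function.comp_apply, e1, e2, e3, e4,
          show σ (s+1) = s + 2 from hσt, show σ (s+2) = s + 1 from hσt1, hs', hs3,
          hb, hc, hd, he]
        norm_num
        all_goals linarith
end
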